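/- (Parabolic Hörmander condition) Let 𝔤 be the smallest ℝ-linear subspace of the space of smooth vector fields on ℝ^{1+N} that contains D̄_0, D̄_1, …, D̄_n and is closed under the Lie bracket operation. Then for every point (t, φ) ∈ ℝ × ℝ^N, the set of vectors {W(t, φ) : W ∈ 𝔤} spans all of ℝ^{1+N}. -/

import Mathlib

open scoped BigOperators

noncomputable section

/-- Vector fields on `ℝ^N`. -/
abbrev VF (N : ℕ) := (Fin N → ℝ) → Fin N → ℝ

/-- The Lie bracket `[V,W](φ) = DW(φ)(V(φ)) − DV(φ)(W(φ))` of vector fields. -/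
def lieBracket {N : ℕ} (V W : VF N) : VF N :=
  fun φ => fderiv ℝ W φ (V φ) - fderiv ℝ V φ (W φ)

/-- The drift vector field `D₀`. -/
def Dfield0 {N : ℕ} (lam μ : ℝ) (k : ℕ) : VF N :=
  fun φ i => (lam - (k : ℝ) * μ ^ 2 / 2) * φ i + lam

/-- The diffusion vector fields `D_j`, `1 ≤ j ≤ n`. -/
def DfieldJ {n N : ℕ} (μ : ℝ) (S : Fin N → Finset (Fin n)) (j : Fin n) : VF N :=
  fun φ i => (μ / Real.sqrt 2) * (φ i * if j ∈ S i then 1 else 0)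

/-- Time-extended vector fields on `ℝ × ℝ^N`. -/
abbrev VFt (N : ℕ) := (ℝ × (Fin N → ℝ)) → ℝ × (Fin N → ℝ)

/-- The Lie bracket of time-extended vector fields. -/
def lieBracketT {N : ℕ} (V W : VFt N) : VFt N :=
  fun x => fderiv ℝ W x (V x) - fderiv ℝ V x (W x)

/-- The time-extended drift vector field `D̄₀`. -/
def Dbar0 {N : ℕ} (lam μ : ℝ) (k : ℕ) : VFt N :=
  fun x => (-1, Dfield0 lam μ k x.2)

/-- The time-extended diffusion vector fields `D̄_j`, `1 ≤ j ≤ n`. -/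
def DbarJ {n N : ℕ} (μ : ℝ) (S : Fin N → Finset (Fin n)) (j : Fin n) : VFt N :=
  fun x => (0, DfieldJ μ S j x.2)

/-!
The fields `D̄_j` are linear and `D̄_0` is affine, both acting diagonally on `φ` and trivially on
`t`. Hence `[D̄_j, D̄_0]` is the constant field `(0, -(μλ/√2) 1_{j ∈ S_i})`, and bracketing a
constant field `(0, w)` with `D̄_j` multiplies `w` coordinatewise by `(μ/√2) 1_{j ∈ S_i}`.
Running through the elements of `S_{i₀}` produces the constant field `(0, 1_{S_{i₀} ⊆ S_i})`,
which is the `i₀`-th basis vector since distinct `k`-sets are incomparable. Together with the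
value of `D̄_0`, whose time component is `-1`, these span `ℝ × ℝ^N` at every point.
-/

namespace ParabolicHormander

open ContinuousLinearMap

variable {n N : ℕ}

def diagSnd (d : Fin N → ℝ) : (ℝ × (Fin N → ℝ)) →L[ℝ] ℝ × (Fin N → ℝ) :=
  (0 : (ℝ × (Fin N → ℝ)) →L[ℝ] ℝ).prod
    ((ContinuousLinearMap.mul ℝ (Fin N → ℝ) d).comp (snd ℝ ℝ (Fin N → ℝ)))

@[simp]
lemma diagSnd_apply (d : Fin N → ℝ) (y : ℝ × (Fin N → ℝ)) : diagSnd d y = (0, d * y.2) := rfl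

lemma lieBracketT_clm_affine (A B : (ℝ × (Fin N → ℝ)) →L[ℝ] ℝ × (Fin N → ℝ))
    (b : ℝ × (Fin N → ℝ)) :
    lieBracketT B (fun x => A x + b) = fun x => A (B x) - B (A x) - B b := by
  funext x
  simp only [lieBracketT, (A.hasFDerivAt.add_const b).fderiv, B.fderiv, map_add]
  abel

lemma lieBracketT_const_clm (v : ℝ × (Fin N → ℝ))
    (B : (ℝ × (Fin N → ℝ)) →L[ℝ] ℝ × (Fin N → ℝ)) :
    lieBracketT (fun _ => v) B = fun _ => B v := by
  funext x
  simp [lieBracketT, B.fderiv]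

def coverInd (S : Fin N → Finset (Fin n)) (T : Finset (Fin n)) : Fin N → ℝ :=
  fun i => if T ⊆ S i then 1 else 0

lemma coverInd_cons (S : Fin N → Finset (Fin n)) {j : Fin n} {T : Finset (Fin n)} (hj : j ∉ T) :
    coverInd S (Finset.cons j T hj) = coverInd S {j} * coverInd S T := by
  funext i
  by_cases hji : j ∈ S i <;> by_cases hTi : T ⊆ S i <;>
    simp [coverInd, hji, hTi, Finset.insert_subset_iff]

lemma coverInd_self {k : ℕ} {S : Fin N → Finset (Fin n)} (hSinj : Function.Injective S)
    (hScard : ∀ i, (S i).card = k) (i₀ : Fin N) :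
    coverInd S (S i₀) = Pi.single i₀ 1 := by
  funext i
  have hsub : S i₀ ⊆ S i ↔ i = i₀ :=
    ⟨fun h => (hSinj (Finset.eq_of_subset_of_card_le h (by rw [hScard, hScard]))).symm,
      fun h => h ▸ subset_rfl⟩
  simp [coverInd, hsub, Pi.single_apply]

lemma DbarJ_eq (μ : ℝ) (S : Fin N → Finset (Fin n)) (j : Fin n) :
    DbarJ μ S j = ⇑(diagSnd ((μ / √2) • coverInd S {j})) := by
  funext x
  ext i <;> simp [DbarJ, DfieldJ, coverInd, mul_comm]

lemma Dbar0_eq (lam μ : ℝ) (k : ℕ) :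
    Dbar0 (N := N) lam μ k =
      fun x => diagSnd (fun _ => lam - k * μ ^ 2 / 2) x + (-1, fun _ => lam) := by
  funext x
  ext i <;> simp [Dbar0, Dfield0]

lemma lieBracketT_DbarJ_Dbar0 (lam μ : ℝ) (k : ℕ) (S : Fin N → Finset (Fin n)) (j : Fin n) :
    lieBracketT (DbarJ μ S j) (Dbar0 lam μ k) =
      fun _ => (0, (-(μ / √2 * lam)) • coverInd S {j}) := by
  rw [DbarJ_eq, Dbar0_eq, lieBracketT_clm_affine]
  funext x
  ext i <;> simp only [diagSnd_apply, Algebra.smul_mul_assoc, Algebra.mul_smul_comm,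
    Prod.mk_sub_mk, sub_self, Pi.sub_apply, Pi.smul_apply, Pi.mul_apply, smul_eq_mul, neg_mul]
  ring

lemma lieBracketT_const_DbarJ (μ : ℝ) (S : Fin N → Finset (Fin n)) (j : Fin n) (w : Fin N → ℝ) :
    lieBracketT (fun _ => (0, w)) (DbarJ μ S j) =
      fun _ => (0, (μ / √2) • (coverInd S {j} * w)) := by
  rw [DbarJ_eq, lieBracketT_const_clm]
  funext x
  ext i <;> simp

lemma mem_of_smul_mem {G : Set (VFt N)} (hsmul : ∀ (a : ℝ), ∀ V ∈ G, a • V ∈ G) {a : ℝ}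
    (ha : a ≠ 0) {V : VFt N} (h : a • V ∈ G) : V ∈ G := by
  simpa [inv_smul_smul₀ ha] using hsmul a⁻¹ _ h

lemma const_mem_of_const_smul_mem {G : Set (VFt N)} (hsmul : ∀ (a : ℝ), ∀ V ∈ G, a • V ∈ G)
    {a : ℝ} (ha : a ≠ 0) {w : Fin N → ℝ} (h : (fun _ => ((0 : ℝ), a • w)) ∈ G) :
    (fun _ => ((0 : ℝ), w)) ∈ G := by
  refine mem_of_smul_mem hsmul ha ?_
  convert h using 1
  funext x
  simp

lemma const_coverInd_mem {G : Set (VFt N)} {lam μ : ℝ} {k : ℕ} {S : Fin N → Finset (Fin n)}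
    (hsmul : ∀ (a : ℝ), ∀ V ∈ G, a • V ∈ G) (hbr : ∀ V ∈ G, ∀ W ∈ G, lieBracketT V W ∈ G)
    (h0 : Dbar0 lam μ k ∈ G) (hJ : ∀ j, DbarJ μ S j ∈ G) (hμ : μ ≠ 0) (hlam : lam ≠ 0)
    {T : Finset (Fin n)} (hT : T.Nonempty) : (fun _ => ((0 : ℝ), coverInd S T)) ∈ G := by
  have hc : μ / √2 ≠ 0 := div_ne_zero hμ (by positivity)
  induction hT using Finset.Nonempty.cons_induction with
  | singleton j =>
    refine const_mem_of_const_smul_mem hsmul (neg_ne_zero.2 (mul_ne_zero hc hlam)) ?_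
    rw [← lieBracketT_DbarJ_Dbar0]
    exact hbr _ (hJ j) _ h0
  | cons j T hj _ ih =>
    refine const_mem_of_const_smul_mem hsmul hc ?_
    rw [coverInd_cons, ← lieBracketT_const_DbarJ]
    exact hbr _ ih _ (hJ j)

lemma submodule_eq_top_of_single_mem (P : Submodule ℝ (ℝ × (Fin N → ℝ)))
    (hsingle : ∀ i, ((0 : ℝ), Pi.single i 1) ∈ P) {a : ℝ} (ha : a ≠ 0) {w : Fin N → ℝ}
    (hw : (a, w) ∈ P) : P = ⊤ := by
  have hzero : ∀ u : Fin N → ℝ, ((0 : ℝ), u) ∈ P := by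
    intro u
    have hu : ((0 : ℝ), u) = ∑ i, u i • ((0 : ℝ), (Pi.single i 1 : Fin N → ℝ)) := by
      ext j <;> simp [Prod.fst_sum, Prod.snd_sum, Pi.single_apply]
    rw [hu]
    exact P.sum_mem fun i _ => P.smul_mem _ (hsingle i)
  refine eq_top_iff.2 fun ⟨s, v⟩ _ => ?_
  have hsv : (s, v) = (s / a) • (a, w) + ((0 : ℝ), v - (s / a) • w) := by
    ext <;> simp [ha]
  rw [hsv]
  exact P.add_mem (P.smul_mem _ hw) (hzero _)

theorem span_eval_eq_top {G : Set (VFt N)} {lam μ : ℝ} {k : ℕ} {S : Fin N → Finset (Fin n)}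
    (hk : 1 ≤ k) (hSinj : Function.Injective S) (hScard : ∀ i, (S i).card = k)
    (hsmul : ∀ (a : ℝ), ∀ V ∈ G, a • V ∈ G) (hbr : ∀ V ∈ G, ∀ W ∈ G, lieBracketT V W ∈ G)
    (h0 : Dbar0 lam μ k ∈ G) (hJ : ∀ j, DbarJ μ S j ∈ G) (hμ : μ ≠ 0) (hlam : lam ≠ 0)
    (x : ℝ × (Fin N → ℝ)) : Submodule.span ℝ ((fun W : VFt N => W x) '' G) = ⊤ := by
  refine submodule_eq_top_of_single_mem _ (fun i => ?_) neg_one_lt_zero.ne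
    (Submodule.subset_span (Set.mem_image_of_mem (fun W : VFt N => W x) h0))
  have hSi : (S i).Nonempty := Finset.card_pos.1 (hScard i ▸ hk)
  rw [← coverInd_self hSinj hScard i]
  exact Submodule.subset_span (Set.mem_image_of_mem (fun W : VFt N => W x)
    (const_coverInd_mem hsmul hbr h0 hJ hμ hlam hSi))

end ParabolicHormander

open ParabolicHormander in
theorem parabolic_hormander_condition_general
    (n k N : ℕ) (hk : 1 ≤ k)
    (S : Fin N → Finset (Fin n)) (hSinj : Function.Injective S)
    (hScard : ∀ i, (S i).card = k)
    (μ lam : ℝ) (hμ : μ ≠ 0) (hlam : 0 < lam) :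
    ∀ x : ℝ × (Fin N → ℝ),
      Submodule.span ℝ ((fun W : VFt N => W x) ''
        (⋂₀ {G : Set (VFt N) |
          (∀ W ∈ G, ContDiff ℝ (⊤ : ℕ∞) W) ∧
          Dbar0 lam μ k ∈ G ∧ (∀ j : Fin n, DbarJ μ S j ∈ G) ∧
          (∀ V ∈ G, ∀ W ∈ G, V + W ∈ G) ∧
          (∀ (a : ℝ), ∀ V ∈ G, a • V ∈ G) ∧
          (∀ V ∈ G, ∀ W ∈ G, lieBracketT V W ∈ G)})) = ⊤ :=
  span_eval_eq_top hk hSinj hScard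
    (fun a V hV => Set.mem_sInter.2 fun G hG => hG.2.2.2.2.1 a V (Set.mem_sInter.1 hV G hG))
    (fun V hV W hW => Set.mem_sInter.2 fun G hG =>
      hG.2.2.2.2.2 V (Set.mem_sInter.1 hV G hG) W (Set.mem_sInter.1 hW G hG))
    (Set.mem_sInter.2 fun _ hG => hG.2.1) (fun j => Set.mem_sInter.2 fun _ hG => hG.2.2.1 j)
    hμ hlam.ne'

theorem parabolic_hormander_condition
    (n k N : ℕ) (hk : 1 ≤ k) (hkn : k < n) (hN : N = n.choose k)
    (S : Fin N → Finset (Fin n)) (hSinj : Function.Injective S)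
    (hScard : ∀ i, (S i).card = k)
    (μ lam : ℝ) (hμ : μ ≠ 0) (hlam : 0 < lam) :
    ∀ x : ℝ × (Fin N → ℝ),
      Submodule.span ℝ ((fun W : VFt N => W x) ''
        (⋂₀ {G : Set (VFt N) |
          (∀ W ∈ G, ContDiff ℝ (⊤ : ℕ∞) W) ∧
          Dbar0 lam μ k ∈ G ∧ (∀ j : Fin n, DbarJ μ S j ∈ G) ∧
          (∀ V ∈ G, ∀ W ∈ G, V + W ∈ G) ∧
          (∀ (a : ℝ), ∀ V ∈ G, a • V ∈ G) ∧
          (∀ V ∈ G, ∀ W ∈ G, lieBracketT V W ∈ G)})) = ⊤ :=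
  parabolic_hormander_condition_general n k N hk S hSinj hScard μ lam hμ hlam

end
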